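/- For all a, b ∈ P and all n, m ∈ ℕ, the operators L_n(a) on P[X] satisfy L_n(a) ∘ L_m(b) − L_m(b) ∘ L_n(a) = L_{n+m}({a,b}). (These are the commutation relations [L_n^a, L_m^b] = L_{n+m}^{[a,b]} of the current Lie conformal algebra realized on the conformal module H ⊗ P.) -/
import Mathlib

/-- The operator `L_n(a)` on `P[X]`, defined on monomials by
`L_n(a)(u·X^m) = n!·( C(m,n)·{a,u}·X^{m−n} + C(m,n−1)·(a·u)·X^{m−n+1} )`,
where the binomial coefficient `C(m,t)` vanishes for `t < 0` or `t > m`,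
extended `k`-linearly. -/
noncomputable def Lop {k P : Type*} [Field k] [CommRing P] [Algebra k P]
    (br : P →ₗ[k] P →ₗ[k] P) (n : ℕ) (a : P) (p : Polynomial P) : Polynomial P :=
  p.sum fun m u =>
    n.factorial •
      (Polynomial.C (m.choose n • br a u) * Polynomial.X ^ (m - n) +
        Polynomial.C ((if n = 0 then 0 else m.choose (n - 1)) • (a * u)) *
          Polynomial.X ^ (m + 1 - n))

namespace LopAux

/-- The guarded binomial coefficient `C(e, n-1)` (zero when `n = 0`). -/
def gg (n e : ℕ) : ℕ := if n = 0 then 0 else e.choose (n - 1)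

lemma gg_succ (n e : ℕ) : gg (n+1) e = e.choose n := rfl

lemma N1 (d n m : ℕ) : n.factorial * (d - m).choose n * (m.factorial * d.choose m)
    = (n + m).factorial * d.choose (n + m) := by
  rcases le_or_gt (n + m) d with h | h
  · have hm : m ≤ d := le_trans (Nat.le_add_left m n) h
    have hn : n ≤ d - m := by omega
    have h1 := Nat.choose_mul_factorial_mul_factorial hn
    have h2 := Nat.choose_mul_factorial_mul_factorial hm
    have h3 := Nat.choose_mul_factorial_mul_factorial h
    have e1 : d - m - n = d - (n + m) := by omega
    apply Nat.eq_of_mul_eq_mul_right (Nat.factorial_pos (d - (n + m)))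
    calc n.factorial * (d - m).choose n * (m.factorial * d.choose m) * (d - (n+m)).factorial
        = (m.factorial * d.choose m) * ((d - m).choose n * n.factorial * (d - m - n).factorial) := by
          rw [e1]; ring
      _ = (m.factorial * d.choose m) * (d - m).factorial := by rw [h1]
      _ = d.choose m * m.factorial * (d - m).factorial := by ring
      _ = d.factorial := h2
      _ = d.choose (n+m) * (n+m).factorial * (d - (n+m)).factorial := h3.symm
      _ = (n + m).factorial * d.choose (n + m) * (d - (n+m)).factorial := by ring
  · have hr : d.choose (n + m) = 0 := Nat.choose_eq_zero_of_lt h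
    rcases le_or_gt m d with hm | hm
    · have : (d - m).choose n = 0 := Nat.choose_eq_zero_of_lt (by omega)
      rw [this, hr]; ring
    · have : d.choose m = 0 := Nat.choose_eq_zero_of_lt hm
      rw [this, hr]; ring

lemma N2 (d n m : ℕ) : d.choose m * (d - m).choose n = d.choose n * (d - n).choose m := by
  apply Nat.eq_of_mul_eq_mul_left (show 0 < n.factorial * m.factorial by positivity)
  calc n.factorial * m.factorial * (d.choose m * (d - m).choose n)
      = n.factorial * (d - m).choose n * (m.factorial * d.choose m) := by ring
    _ = (n + m).factorial * d.choose (n + m) := N1 d n m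
    _ = (m + n).factorial * d.choose (m + n) := by rw [add_comm]
    _ = m.factorial * (d - n).choose m * (n.factorial * d.choose n) := (N1 d m n).symm
    _ = n.factorial * m.factorial * (d.choose n * (d - n).choose m) := by ring

lemma N3 (d n m : ℕ) :
    (n+1).factorial * (d - m).choose (n+1) * ((m+1).factorial * d.choose m)
      + (m+1).factorial * (d - n).choose (m+1) * ((n+1).factorial * d.choose n)
    = (n + 1 + (m + 1)).factorial * d.choose (n + m + 1) := by
  rcases le_or_gt (n + m + 1) d with h | h
  · have hm : m ≤ d := by omega
    have hn : n ≤ d := by omega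
    have h1 : (d-m).choose (n+1) * (n+1).factorial * (d - (n+m+1)).factorial = (d-m).factorial := by
      have := Nat.choose_mul_factorial_mul_factorial (show n+1 ≤ d - m by omega)
      have e : d - m - (n+1) = d - (n+m+1) := by omega
      rwa [e] at this
    have h2 := Nat.choose_mul_factorial_mul_factorial hm
    have h1' : (d-n).choose (m+1) * (m+1).factorial * (d - (n+m+1)).factorial = (d-n).factorial := by
      have := Nat.choose_mul_factorial_mul_factorial (show m+1 ≤ d - n by omega)
      have e : d - n - (m+1) = d - (n+m+1) := by omega
      rwa [e] at this
    have h2' := Nat.choose_mul_factorial_mul_factorial hn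
    have h3 := Nat.choose_mul_factorial_mul_factorial h
    apply Nat.eq_of_mul_eq_mul_right (Nat.factorial_pos (d - (n+m+1)))
    have fs : (n + 1 + (m + 1)).factorial = (n+m+2) * (n+m+1).factorial := by
      have : n + 1 + (m + 1) = (n+m+1) + 1 := by omega
      rw [this, Nat.factorial_succ]
    have fm : (m+1).factorial = (m+1) * m.factorial := Nat.factorial_succ m
    have fn : (n+1).factorial = (n+1) * n.factorial := Nat.factorial_succ n
    calc ((n+1).factorial * (d - m).choose (n+1) * ((m+1).factorial * d.choose m)
          + (m+1).factorial * (d - n).choose (m+1) * ((n+1).factorial * d.choose n)) * (d - (n+m+1)).factorial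
        = ((m+1).factorial * d.choose m) * ((d-m).choose (n+1) * (n+1).factorial * (d - (n+m+1)).factorial)
          + ((n+1).factorial * d.choose n) * ((d-n).choose (m+1) * (m+1).factorial * (d - (n+m+1)).factorial) := by ring
      _ = ((m+1).factorial * d.choose m) * (d-m).factorial + ((n+1).factorial * d.choose n) * (d-n).factorial := by rw [h1, h1']
      _ = (m+1) * (d.choose m * m.factorial * (d-m).factorial) + (n+1) * (d.choose n * n.factorial * (d-n).factorial) := by rw [fm, fn]; ring
      _ = (m+1) * d.factorial + (n+1) * d.factorial := by rw [h2, h2']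
      _ = (n+m+2) * (d.choose (n+m+1) * (n+m+1).factorial * (d - (n+m+1)).factorial) := by rw [h3]; ring
      _ = (n + 1 + (m + 1)).factorial * d.choose (n + m + 1) * (d - (n+m+1)).factorial := by rw [fs]; ring
  · have hr : d.choose (n + m + 1) = 0 := Nat.choose_eq_zero_of_lt h
    have e1 : (d - m).choose (n+1) * d.choose m = 0 := by
      rcases le_or_gt m d with hm | hm
      · have : (d - m).choose (n+1) = 0 := Nat.choose_eq_zero_of_lt (by omega)
        rw [this]; ring
      · have : d.choose m = 0 := Nat.choose_eq_zero_of_lt hm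
        rw [this]; ring
    have e2 : (d - n).choose (m+1) * d.choose n = 0 := by
      rcases le_or_gt n d with hn | hn
      · have : (d - n).choose (m+1) = 0 := Nat.choose_eq_zero_of_lt (by omega)
        rw [this]; ring
      · have : d.choose n = 0 := Nat.choose_eq_zero_of_lt hn
        rw [this]; ring
    have t1 : (n+1).factorial * (d - m).choose (n+1) * ((m+1).factorial * d.choose m)
        = (n+1).factorial * (m+1).factorial * ((d - m).choose (n+1) * d.choose m) := by ring
    have t2 : (m+1).factorial * (d - n).choose (m+1) * ((n+1).factorial * d.choose n)
        = (n+1).factorial * (m+1).factorial * ((d - n).choose (m+1) * d.choose n) := by ring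
    rw [hr, t1, t2, e1, e2]
    ring

section
open Polynomial
variable {k P : Type*} [Field k] [CommRing P] [Algebra k P] (br : P →ₗ[k] P →ₗ[k] P)

lemma Lop_monomial (n : ℕ) (a : P) (d : ℕ) (u : P) :
    Lop br n a (monomial d u)
      = monomial (d - n) ((n.factorial * d.choose n) • br a u)
        + monomial (d + 1 - n) ((n.factorial * gg n d) • (a * u)) := by
  unfold Lop
  rw [Polynomial.sum_monomial_index]
  · rw [C_mul_X_pow_eq_monomial, C_mul_X_pow_eq_monomial, smul_add, smul_monomial,
      smul_monomial, smul_smul, smul_smul]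
    rfl
  · simp

lemma Lop_add (n : ℕ) (a : P) (p q : Polynomial P) :
    Lop br n a (p + q) = Lop br n a p + Lop br n a q := by
  unfold Lop
  apply Polynomial.sum_add_index
  · intro i; simp
  · intro i x y
    simp only [map_add, smul_add, mul_add, map_add]
    ring

lemma Lop_monomial_smul (n : ℕ) (a : P) (e c : ℕ) (x : P) :
    Lop br n a (monomial e (c • x))
      = monomial (e - n) ((n.factorial * e.choose n * c) • br a x)
        + monomial (e + 1 - n) ((n.factorial * gg n e * c) • (a * x)) := by
  rw [Lop_monomial]
  congr 1
  · rw [map_nsmul (br a) c x, smul_smul]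
  · rw [mul_smul_comm, smul_smul]

variable {P₀ : Type*} [CommRing P₀]

lemma NC (d n' m : ℕ) : (n'+1).factorial * (d - m).choose n' * (m.factorial * d.choose m)
    = m.factorial * (d - n').choose m * ((n'+1).factorial * d.choose n') := by
  have h := N2 d n' m
  calc (n'+1).factorial * (d - m).choose n' * (m.factorial * d.choose m)
      = (n'+1).factorial * m.factorial * (d.choose m * (d - m).choose n') := by ring
    _ = (n'+1).factorial * m.factorial * (d.choose n' * (d - n').choose m) := by rw [h]
    _ = m.factorial * (d - n').choose m * ((n'+1).factorial * d.choose n') := by ring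

lemma E2 (d n m : ℕ) (x : P₀) :
    monomial ((d - m) + 1 - n) ((n.factorial * gg n (d - m) * (m.factorial * d.choose m)) • x)
      = monomial ((d + 1 - n) - m) ((m.factorial * (d + 1 - n).choose m * (n.factorial * gg n d)) • x) := by
  rcases n with _ | n'
  · simp [gg]
  · rw [gg_succ, gg_succ]
    have he : (d - m) + 1 - (n'+1) = (d + 1 - (n'+1)) - m := by omega
    have h1 : d + 1 - (n'+1) = d - n' := by omega
    rw [he, h1, NC d n' m]

lemma E4 (d n m : ℕ) (x : P₀) :
    monomial ((d + 1 - m) + 1 - n) ((n.factorial * gg n (d + 1 - m) * (m.factorial * gg m d)) • x)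
      = monomial ((d + 1 - n) + 1 - m) ((m.factorial * gg m (d + 1 - n) * (n.factorial * gg n d)) • x) := by
  rcases n with _ | n'
  · simp [gg]
  · rcases m with _ | m'
    · simp [gg]
    · rw [gg_succ, gg_succ, gg_succ, gg_succ]
      have e1 : d + 1 - (m'+1) = d - m' := by omega
      have e2 : d + 1 - (n'+1) = d - n' := by omega
      rw [e1, e2]
      have e3 : (d - m') + 1 - (n'+1) = (d - n') + 1 - (m'+1) := by omega
      rw [e3]
      have hc : (n'+1).factorial * (d - m').choose n' * ((m'+1).factorial * d.choose m')
          = (m'+1).factorial * (d - n').choose m' * ((n'+1).factorial * d.choose n') := by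
        have h := N2 d n' m'
        calc (n'+1).factorial * (d - m').choose n' * ((m'+1).factorial * d.choose m')
            = (n'+1).factorial * (m'+1).factorial * (d.choose m' * (d - m').choose n') := by ring
          _ = (n'+1).factorial * (m'+1).factorial * (d.choose n' * (d - n').choose m') := by rw [h]
          _ = (m'+1).factorial * (d - n').choose m' * ((n'+1).factorial * d.choose n') := by ring
      rw [hc]

lemma E3 (d n m : ℕ) (x : P₀) :
    monomial ((d + 1 - m) - n) ((n.factorial * (d + 1 - m).choose n * (m.factorial * gg m d)) • x)
      + monomial ((d + 1 - n) - m) ((m.factorial * (d + 1 - n).choose m * (n.factorial * gg n d)) • x)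
      = monomial (d + 1 - (n + m)) (((n + m).factorial * gg (n + m) d) • x) := by
  rcases n with _ | n'
  · simp [gg]
  · rcases m with _ | m'
    · have e1 : (d + 1 - 0) - (n'+1) = d + 1 - (n'+1+0) := by omega
      simp only [Nat.sub_zero, Nat.choose_zero_right, Nat.add_zero]
      rw [show gg 0 d = 0 from rfl]
      simp [gg_succ, e1]
    · rw [gg_succ, gg_succ, show gg (n'+1+(m'+1)) d = d.choose (n'+1+(m'+1)-1) from rfl]
      have e1 : (d + 1 - (m'+1)) - (n'+1) = d + 1 - (n'+1+(m'+1)) := by omega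
      have e2 : (d + 1 - (n'+1)) - (m'+1) = d + 1 - (n'+1+(m'+1)) := by omega
      have e3 : d + 1 - (m'+1) = d - m' := by omega
      have e4 : d + 1 - (n'+1) = d - n' := by omega
      have e5 : n'+1+(m'+1)-1 = n' + m' + 1 := by omega
      rw [e1, e2, e3, e4, e5, ← map_add, ← add_smul, N3 d n' m']

lemma key
    (anti : ∀ x y : P, br x y = - br y x)
    (jacobi : ∀ x y z : P, br x (br y z) - br y (br x z) = br (br x y) z)
    (leibniz : ∀ x y z : P, br x (y * z) = y * br x z + z * br x y)
    (a b u : P) (n m d : ℕ) :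
    Lop br n a (Lop br m b (monomial d u)) - Lop br m b (Lop br n a (monomial d u))
      = Lop br (n + m) (br a b) (monomial d u) := by
  have hA : Lop br n a (Lop br m b (monomial d u)) =
      monomial ((d-m)-n) ((n.factorial * (d-m).choose n * (m.factorial * d.choose m)) • br a (br b u))
      + monomial ((d-m)+1-n) ((n.factorial * gg n (d-m) * (m.factorial * d.choose m)) • (a * br b u))
      + (monomial ((d+1-m)-n) ((n.factorial * (d+1-m).choose n * (m.factorial * gg m d)) • (b * br a u))
         + monomial ((d+1-m)-n) ((n.factorial * (d+1-m).choose n * (m.factorial * gg m d)) • (u * br a b)))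
      + monomial ((d+1-m)+1-n) ((n.factorial * gg n (d+1-m) * (m.factorial * gg m d)) • (a * (b * u))) := by
    rw [Lop_monomial br m b d u, Lop_add, Lop_monomial_smul, Lop_monomial_smul,
      leibniz a b u, smul_add, map_add]
    ring
  have hB : Lop br m b (Lop br n a (monomial d u)) =
      monomial ((d-n)-m) ((m.factorial * (d-n).choose m * (n.factorial * d.choose n)) • br b (br a u))
      + monomial ((d-n)+1-m) ((m.factorial * gg m (d-n) * (n.factorial * d.choose n)) • (b * br a u))
      + (monomial ((d+1-n)-m) ((m.factorial * (d+1-n).choose m * (n.factorial * gg n d)) • (a * br b u))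
         - monomial ((d+1-n)-m) ((m.factorial * (d+1-n).choose m * (n.factorial * gg n d)) • (u * br a b)))
      + monomial ((d+1-n)+1-m) ((m.factorial * gg m (d+1-n) * (n.factorial * gg n d)) • (a * (b * u))) := by
    rw [Lop_monomial br n a d u, Lop_add, Lop_monomial_smul, Lop_monomial_smul,
      leibniz b a u, anti b a, show b * (a * u) = a * (b * u) from mul_left_comm b a u]
    simp only [mul_neg, smul_add, smul_neg, map_add, map_neg]
    ring
  have hR : Lop br (n+m) (br a b) (monomial d u)
      = monomial (d-(n+m)) (((n+m).factorial * d.choose (n+m)) • br (br a b) u)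
        + monomial (d+1-(n+m)) (((n+m).factorial * gg (n+m) d) • (u * br a b)) := by
    rw [Lop_monomial br (n+m) (br a b) d u, show br a b * u = u * br a b from mul_comm _ _]
  have h1 : monomial ((d-m)-n) ((n.factorial * (d-m).choose n * (m.factorial * d.choose m)) • br a (br b u))
        - monomial ((d-n)-m) ((m.factorial * (d-n).choose m * (n.factorial * d.choose n)) • br b (br a u))
        = monomial (d-(n+m)) (((n+m).factorial * d.choose (n+m)) • br (br a b) u) := by
    have e1 : (d-m)-n = d-(n+m) := by omega
    have e2 : (d-n)-m = d-(n+m) := by omega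
    have c2 : m.factorial * (d-n).choose m * (n.factorial * d.choose n)
        = (n+m).factorial * d.choose (n+m) := by rw [N1 d m n, add_comm m n]
    rw [e1, e2, N1 d n m, c2, ← map_sub, ← smul_sub, jacobi a b u]
  have h2 := E2 d n m (a * br b u)
  have h3 := E2 d m n (b * br a u)
  have h4 := E4 d n m (a * (b * u))
  have h5 := E3 d n m (u * br a b)
  rw [hA, hB, hR]
  linear_combination h1 + h2 + h4 + h5 - h3

end
end LopAux

/-- For all `a b ∈ P` and all `n m : ℕ`, the operators `L_n(a)` on `P[X]` satisfy
`L_n(a) ∘ L_m(b) − L_m(b) ∘ L_n(a) = L_{n+m}({a,b})`, the commutation relations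
`[L_n^a, L_m^b] = L_{n+m}^{[a,b]}` of the current Lie conformal algebra realized on the
conformal module `H ⊗ P`. -/
theorem Lop_commutator
    {k : Type*} [Field k] [CharZero k]
    {P : Type*} [CommRing P] [Algebra k P]
    (br : P →ₗ[k] P →ₗ[k] P)
    (anti : ∀ x y : P, br x y = - br y x)
    (jacobi : ∀ x y z : P, br x (br y z) - br y (br x z) = br (br x y) z)
    (leibniz : ∀ x y z : P, br x (y * z) = y * br x z + z * br x y)
    (a b : P) (n m : ℕ) (p : Polynomial P) :
    Lop br n a (Lop br m b p) - Lop br m b (Lop br n a p) = Lop br (n + m) (br a b) p := by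
  induction p using Polynomial.induction_on' with
  | add p q hp hq =>
    rw [LopAux.Lop_add br m b p q, LopAux.Lop_add br n a p q,
      LopAux.Lop_add br n a, LopAux.Lop_add br m b, LopAux.Lop_add br (n+m) (br a b) p q]
    linear_combination hp + hq
  | monomial d u => exact LopAux.key br anti jacobi leibniz a b u n m d
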